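/- arXiv:2510.25307 — 2 statements merged into one kernel-verified Lean document; each statement's English description precedes it below -/
import Mathlib

section
/- Let n be a finite index type and A a complex n×n matrix. Let z ∈ ℂ with Re(z) > ‖A‖, where ‖A‖ denotes the operator norm of A (acting on the Euclidean space ℂⁿ). Then trace((z·I - A)⁻¹) equals the integral over t ∈ [0, ∞) of e^{-z t} · trace(exp(t·A)), where exp denotes the matrix exponential. -/
open MeasureTheory
open scoped Matrix.Norms.L2Operator

/-!
`F t = e^{-zt} e^{tA}` solves `F' = -(z - A) F` with `F 0 = 1`, and `‖e^{tA}‖ ≤ C e^{t‖A‖}` makes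
it decay like `e^{-(Re z - ‖A‖) t}`. Integrating the equation over `(0, ∞)` gives
`(z - A) ∫ F = 1`, so `∫ F = (z - A)⁻¹`, and the trace, being linear, passes under the integral.
-/

open NormedSpace Filter Topology

theorem norm_exp_le_max_norm_one_mul_exp_norm (𝕂 : Type*) {𝔸 : Type*} [RCLike 𝕂] [NormedRing 𝔸]
    [NormedAlgebra 𝕂 𝔸] [CompleteSpace 𝔸] (x : 𝔸) :
    ‖exp x‖ ≤ max ‖(1 : 𝔸)‖ 1 * Real.exp ‖x‖ := by
  set C := max ‖(1 : 𝔸)‖ 1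
  have norm_pow_le (m : ℕ) : ‖x ^ m‖ ≤ C * ‖x‖ ^ m := by
    rcases m.eq_zero_or_pos with rfl | hm
    · rw [pow_zero, pow_zero, mul_one]
      exact le_max_left _ _
    · exact (norm_pow_le' x hm).trans
        (le_mul_of_one_le_left (by positivity) (le_max_right _ _))
  have hasSum_bound : HasSum (fun m : ℕ => C * ((m.factorial : ℝ)⁻¹ • ‖x‖ ^ m))
      (C * Real.exp ‖x‖) := by
    rw [Real.exp_eq_exp_ℝ]
    exact (exp_series_hasSum_exp' (𝕂 := ℝ) ‖x‖).mul_left C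
  rw [exp_eq_tsum 𝕂]
  refine tsum_of_norm_bounded hasSum_bound fun m => ?_
  rw [norm_smul, norm_inv, RCLike.norm_natCast, smul_eq_mul, mul_left_comm]
  gcongr
  exact norm_pow_le m

section LaplaceTransform

variable {𝔸 : Type*} [NormedRing 𝔸] [NormedAlgebra ℂ 𝔸] [CompleteSpace 𝔸]

theorem hasDerivAt_cexp_smul_exp_smul (z : ℂ) (a : 𝔸) (t : ℝ) :
    HasDerivAt (fun s : ℝ => Complex.exp (-z * s) • exp (s • a))
      (-((z • 1 - a) * (Complex.exp (-z * t) • exp (t • a)))) t := by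
  have hscalar : HasDerivAt (fun s : ℝ => Complex.exp (-z * s)) (Complex.exp (-z * t) * -z) t := by
    simpa using ((hasDerivAt_id (t : ℂ)).const_mul (-z)).cexp.comp_ofReal
  refine (hscalar.smul (hasDerivAt_exp_smul_const' (𝕂 := ℝ) a t)).congr_deriv ?_
  simp only [sub_mul, smul_mul_assoc, one_mul, mul_smul_comm]
  module

theorem norm_cexp_smul_exp_smul_le (z : ℂ) (a : 𝔸) {t : ℝ} (ht : 0 ≤ t) :
    ‖Complex.exp (-z * t) • exp (t • a)‖ ≤
      max ‖(1 : 𝔸)‖ 1 * Real.exp (-(z.re - ‖a‖) * t) := by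
  have hexp : ‖exp (t • a)‖ ≤ max ‖(1 : 𝔸)‖ 1 * Real.exp (t * ‖a‖) := by
    simpa [norm_smul, abs_of_nonneg ht] using norm_exp_le_max_norm_one_mul_exp_norm ℝ (t • a)
  calc ‖Complex.exp (-z * t) • exp (t • a)‖
      ≤ Real.exp (-(z.re * t)) * (max ‖(1 : 𝔸)‖ 1 * Real.exp (t * ‖a‖)) := by
        rw [norm_smul, Complex.norm_exp]
        simpa using mul_le_mul_of_nonneg_left hexp (Real.exp_pos _).le
    _ = max ‖(1 : 𝔸)‖ 1 * Real.exp (-(z.re - ‖a‖) * t) := by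
        rw [mul_left_comm, ← Real.exp_add]; ring_nf

theorem continuous_cexp_smul_exp_smul (z : ℂ) (a : 𝔸) :
    Continuous fun t : ℝ => Complex.exp (-z * t) • exp (t • a) :=
  continuous_iff_continuousAt.2 fun t => (hasDerivAt_cexp_smul_exp_smul z a t).continuousAt

variable {z : ℂ} {a : 𝔸}

theorem integrableOn_cexp_smul_exp_smul_Ioi (h : ‖a‖ < z.re) :
    IntegrableOn (fun t : ℝ => Complex.exp (-z * t) • exp (t • a)) (Set.Ioi 0) := by
  refine Integrable.mono'
    ((exp_neg_integrableOn_Ioi 0 (sub_pos.2 h)).const_mul (max ‖(1 : 𝔸)‖ 1))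
    (continuous_cexp_smul_exp_smul z a).aestronglyMeasurable.restrict ?_
  filter_upwards [ae_restrict_mem measurableSet_Ioi] with t ht
  exact norm_cexp_smul_exp_smul_le z a ht.le

theorem tendsto_cexp_smul_exp_smul_atTop (h : ‖a‖ < z.re) :
    Tendsto (fun t : ℝ => Complex.exp (-z * t) • exp (t • a)) atTop (𝓝 0) := by
  refine squeeze_zero_norm' ((eventually_ge_atTop 0).mono fun t ht =>
    norm_cexp_smul_exp_smul_le z a ht) ?_
  have hexp : Tendsto (fun t : ℝ => Real.exp (-(z.re - ‖a‖) * t)) atTop (𝓝 0) :=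
    Real.tendsto_exp_atBot.comp
      (tendsto_id.const_mul_atTop_of_neg (neg_neg_of_pos (sub_pos.2 h)))
  simpa using hexp.const_mul (max ‖(1 : 𝔸)‖ 1)

theorem mul_integral_cexp_smul_exp_smul (h : ‖a‖ < z.re) :
    (z • 1 - a) * ∫ t in Set.Ioi (0 : ℝ), Complex.exp (-z * t) • exp (t • a) = 1 := by
  have hint := integrableOn_cexp_smul_exp_smul_Ioi h
  have hFTC := integral_Ioi_of_hasDerivAt_of_tendsto'
    (fun t _ => hasDerivAt_cexp_smul_exp_smul z a t) (hint.const_mul (z • 1 - a)).neg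
    (tendsto_cexp_smul_exp_smul_atTop h)
  rw [integral_neg, Complex.ofReal_zero, zero_smul, mul_zero, Complex.exp_zero, exp_zero, one_smul,
    zero_sub, neg_inj] at hFTC
  exact ((ContinuousLinearMap.mul ℂ 𝔸 (z • 1 - a)).integral_comp_comm hint).symm.trans hFTC

end LaplaceTransform

theorem Matrix.trace_integral {n X : Type*} [Fintype n] [DecidableEq n] [MeasurableSpace X]
    {μ : Measure X} {F : X → Matrix n n ℂ} (hF : Integrable F μ) :
    (∫ x, F x ∂μ).trace = ∫ x, (F x).trace ∂μ :=
  ((Matrix.traceLinearMap n ℂ ℂ).toContinuousLinearMap.integral_comp_comm hF).symm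

/-- For a complex square matrix `A` and `z ∈ ℂ` with `Re z > ‖A‖` (operator norm of `A`
acting on Euclidean space), one has `trace((z·I - A)⁻¹) = ∫₀^∞ e^{-zt} trace(exp(tA)) dt`.
Here `‖·‖` is the L² operator norm on matrices, i.e. the norm of the induced continuous
linear map on `EuclideanSpace ℂ n`, and `exp` is the matrix exponential. -/
theorem trace_resolvent_eq_integral (n : Type*) [Fintype n] [DecidableEq n]
    (A : Matrix n n ℂ) (z : ℂ) (hz : ‖A‖ < z.re) :
    Matrix.trace ((z • (1 : Matrix n n ℂ) - A)⁻¹) =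
      ∫ t in Set.Ici (0 : ℝ),
        Complex.exp (-z * t) * Matrix.trace (NormedSpace.exp (t • A)) := by
  rw [Matrix.inv_eq_right_inv (mul_integral_cexp_smul_exp_smul hz),
    Matrix.trace_integral (integrableOn_cexp_smul_exp_smul_Ioi hz), integral_Ici_eq_integral_Ioi]
  simp only [Matrix.trace_smul, smul_eq_mul]
end

section
/- Let ι be a countable index set, L₀ > 0, and ℓ : ι → ℝ with ℓ(i) ≥ L₀ for all i. Let z ∈ ℝ with z > 0 such that the family i ↦ e^{-z·ℓ(i)} is summable. Then the double series ∑_{i ∈ ι} ∑_{n=0}^{∞} e^{-(n+1)·(z + 1/2)·ℓ(i)} / ((n+1)·(1 - e^{-(n+1)·ℓ(i)})) converges, the double infinite product ∏_{i ∈ ι} ∏_{m=0}^{∞} (1 - e^{-(z + 1/2 + m)·ℓ(i)}) converges, and exp(-∑_{i ∈ ι} ∑_{n=0}^{∞} e^{-(n+1)·(z + 1/2)·ℓ(i)} / ((n+1)·(1 - e^{-(n+1)·ℓ(i)}))) = ∏_{i ∈ ι} ∏_{m=0}^{∞} (1 - e^{-(z + 1/2 + m)·ℓ(i)}). -/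
open Real

private lemma aux_geom (a l : ℝ) (ha : 0 < a) (hl : 0 < l) (n : ℕ) :
    HasSum (fun m : ℕ => Real.exp (-(((n : ℝ) + 1) * (a + (m : ℝ)) * l)) / ((n : ℝ) + 1))
      (Real.exp (-(((n : ℝ) + 1) * a * l)) /
        (((n : ℝ) + 1) * (1 - Real.exp (-(((n : ℝ) + 1) * l))))) := by
  have hn : (0:ℝ) < (n : ℝ) + 1 := by positivity
  have hr0 : (0:ℝ) ≤ Real.exp (-(((n : ℝ) + 1) * l)) := Real.exp_nonneg _
  have hr1 : Real.exp (-(((n : ℝ) + 1) * l)) < 1 :=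
    Real.exp_lt_one_iff.2 (by nlinarith)
  have hgeo := (hasSum_geometric_of_lt_one hr0 hr1).mul_left
    (Real.exp (-(((n : ℝ) + 1) * a * l)) / ((n : ℝ) + 1))
  have heq : (fun m : ℕ => Real.exp (-(((n : ℝ) + 1) * a * l)) / ((n : ℝ) + 1) *
      Real.exp (-(((n : ℝ) + 1) * l)) ^ m) =
      fun m : ℕ => Real.exp (-(((n : ℝ) + 1) * (a + (m : ℝ)) * l)) / ((n : ℝ) + 1) := by
    funext m
    rw [← Real.exp_nat_mul, div_mul_eq_mul_div, ← Real.exp_add]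
    ring_nf
  rw [heq] at hgeo
  have hval : Real.exp (-(((n : ℝ) + 1) * a * l)) / ((n : ℝ) + 1) *
      (1 - Real.exp (-(((n : ℝ) + 1) * l)))⁻¹ =
      Real.exp (-(((n : ℝ) + 1) * a * l)) /
        (((n : ℝ) + 1) * (1 - Real.exp (-(((n : ℝ) + 1) * l)))) := by
    rw [inv_eq_one_div, div_mul_div_comm, mul_one]
  rw [hval] at hgeo
  exact hgeo

private lemma aux_log (a l : ℝ) (ha : 0 < a) (hl : 0 < l) (m : ℕ) :
    HasSum (fun n : ℕ => Real.exp (-(((n : ℝ) + 1) * (a + (m : ℝ)) * l)) / ((n : ℝ) + 1))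
      (-Real.log (1 - Real.exp (-((a + (m : ℝ)) * l)))) := by
  have hm : (0:ℝ) ≤ (m : ℝ) := Nat.cast_nonneg m
  have hx0 : (0:ℝ) < Real.exp (-((a + (m : ℝ)) * l)) := Real.exp_pos _
  have hx1 : Real.exp (-((a + (m : ℝ)) * l)) < 1 :=
    Real.exp_lt_one_iff.2 (by nlinarith)
  have h := hasSum_pow_div_log_of_abs_lt_one
    (x := Real.exp (-((a + (m : ℝ)) * l))) (by rw [abs_of_pos hx0]; exact hx1)
  convert h using 1
  funext n
  rw [← Real.exp_nat_mul]
  push_cast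
  ring_nf


set_option maxHeartbeats 1000000 in
/-- Abstract length-spectrum form of the identity `d_sc(z) = ζ_Selberg(z + 1/2)` between
the semiclassical (Gutzwiller–Voros) zeta function and the Selberg zeta function:
for a countable family of lengths `ℓ i ≥ L₀ > 0` and `z > 0` with `i ↦ e^{-z ℓ i}`
summable, the double series `∑_i ∑_{n≥0} e^{-(n+1)(z+1/2) ℓ i}/((n+1)(1 - e^{-(n+1) ℓ i}))`
converges, the double product `∏_i ∏_{m≥0} (1 - e^{-(z+1/2+m) ℓ i})` converges, and the
exponential of minus the double series equals the double product. -/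
theorem semiclassical_zeta_eq_selberg (ι : Type*) [Countable ι]
    (L₀ : ℝ) (hL₀ : 0 < L₀) (ℓ : ι → ℝ) (hℓ : ∀ i, L₀ ≤ ℓ i)
    (z : ℝ) (hz : 0 < z) (hsum : Summable fun i => Real.exp (-z * ℓ i)) :
    Summable (fun p : ι × ℕ =>
      Real.exp (-(((p.2 : ℝ) + 1) * (z + 1 / 2) * ℓ p.1)) /
        (((p.2 : ℝ) + 1) * (1 - Real.exp (-(((p.2 : ℝ) + 1) * ℓ p.1))))) ∧
    Multipliable (fun p : ι × ℕ =>
      1 - Real.exp (-((z + 1 / 2 + (p.2 : ℝ)) * ℓ p.1))) ∧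
    Real.exp (-(∑' i, ∑' n : ℕ,
        Real.exp (-(((n : ℝ) + 1) * (z + 1 / 2) * ℓ i)) /
          (((n : ℝ) + 1) * (1 - Real.exp (-(((n : ℝ) + 1) * ℓ i)))))) =
      ∏' i, ∏' m : ℕ, (1 - Real.exp (-((z + 1 / 2 + (m : ℝ)) * ℓ i))) := by
  have haz : z < z + 1 / 2 := by norm_num
  set a : ℝ := z + 1 / 2 with ha_def
  have ha : 0 < a := hz.trans haz
  have hℓpos : ∀ i, 0 < ℓ i := fun i => lt_of_lt_of_le hL₀ (hℓ i)
  -- the triple-indexed family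
  have hFnonneg : ∀ q : (ι × ℕ) × ℕ,
      0 ≤ Real.exp (-(((q.1.2 : ℝ) + 1) * (a + (q.2 : ℝ)) * ℓ q.1.1)) / ((q.1.2 : ℝ) + 1) :=
    fun q => div_nonneg (Real.exp_nonneg _) (by positivity)
  -- summability by comparison
  have hB : Summable (fun q : (ι × ℕ) × ℕ =>
      (Real.exp (-z * ℓ q.1.1) * Real.exp (-(a * L₀)) ^ q.1.2) * Real.exp (-L₀) ^ q.2) := by
    exact Summable.mul_of_nonneg
      (Summable.mul_of_nonneg hsum
        (summable_geometric_of_lt_one (Real.exp_nonneg _)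
          (Real.exp_lt_one_iff.2 (by nlinarith)))
        (fun i => Real.exp_nonneg _)
        (fun n => pow_nonneg (Real.exp_nonneg _) _))
      (summable_geometric_of_lt_one (Real.exp_nonneg _)
        (Real.exp_lt_one_iff.2 (by linarith)))
      (fun p => mul_nonneg (Real.exp_nonneg _) (pow_nonneg (Real.exp_nonneg _) _))
      (fun m => pow_nonneg (Real.exp_nonneg _) _)
  have hF : Summable (fun q : (ι × ℕ) × ℕ =>
      Real.exp (-(((q.1.2 : ℝ) + 1) * (a + (q.2 : ℝ)) * ℓ q.1.1)) / ((q.1.2 : ℝ) + 1)) := by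
    apply Summable.of_nonneg_of_le hFnonneg _ hB
    rintro ⟨⟨i, n⟩, m⟩
    have hn : (0:ℝ) ≤ (n:ℝ) := Nat.cast_nonneg n
    have hm : (0:ℝ) ≤ (m:ℝ) := Nat.cast_nonneg m
    have h1 : Real.exp (-(((n : ℝ) + 1) * (a + (m : ℝ)) * ℓ i)) / ((n : ℝ) + 1) ≤
        Real.exp (-(((n : ℝ) + 1) * (a + (m : ℝ)) * ℓ i)) :=
      div_le_self (Real.exp_nonneg _) (by linarith)
    refine h1.trans ?_
    simp only
    rw [← Real.exp_nat_mul, ← Real.exp_nat_mul, ← Real.exp_add, ← Real.exp_add]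
    apply Real.exp_le_exp.2
    have hℓi := hℓ i
    have hℓip := hℓpos i
    nlinarith [mul_le_mul_of_nonneg_left (hℓ i) hn, mul_le_mul_of_nonneg_left (hℓ i) hm,
      mul_nonneg (mul_nonneg hn hm) (hℓpos i).le,
      mul_le_mul_of_nonneg_left (hℓ i) (mul_nonneg hn ha.le)]
  have h2 : ∀ (i : ι) (n : ℕ), HasSum
      (fun m : ℕ => Real.exp (-(((n : ℝ) + 1) * (a + (m : ℝ)) * ℓ i)) / ((n : ℝ) + 1))
      (Real.exp (-(((n : ℝ) + 1) * a * ℓ i)) /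
        (((n : ℝ) + 1) * (1 - Real.exp (-(((n : ℝ) + 1) * ℓ i))))) :=
    fun i n => aux_geom a (ℓ i) ha (hℓpos i) n
  have h3 : ∀ (i : ι) (m : ℕ), HasSum
      (fun n : ℕ => Real.exp (-(((n : ℝ) + 1) * (a + (m : ℝ)) * ℓ i)) / ((n : ℝ) + 1))
      (-Real.log (1 - Real.exp (-((a + (m : ℝ)) * ℓ i)))) :=
    fun i m => aux_log a (ℓ i) ha (hℓpos i) m
  -- swapped family
  let e : (ι × ℕ) × ℕ ≃ (ι × ℕ) × ℕ :=
    ⟨fun q => ((q.1.1, q.2), q.1.2), fun q => ((q.1.1, q.2), q.1.2),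
      fun q => rfl, fun q => rfl⟩
  have hG : Summable (fun q : (ι × ℕ) × ℕ =>
      Real.exp (-(((q.2 : ℝ) + 1) * (a + (q.1.2 : ℝ)) * ℓ q.1.1)) / ((q.2 : ℝ) + 1)) :=
    (e.summable_iff (f := fun q : (ι × ℕ) × ℕ =>
      Real.exp (-(((q.1.2 : ℝ) + 1) * (a + (q.2 : ℝ)) * ℓ q.1.1)) / ((q.1.2 : ℝ) + 1))).2 hF
  have hGF : (∑' q : (ι × ℕ) × ℕ,
      Real.exp (-(((q.2 : ℝ) + 1) * (a + (q.1.2 : ℝ)) * ℓ q.1.1)) / ((q.2 : ℝ) + 1)) =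
      ∑' q : (ι × ℕ) × ℕ,
      Real.exp (-(((q.1.2 : ℝ) + 1) * (a + (q.2 : ℝ)) * ℓ q.1.1)) / ((q.1.2 : ℝ) + 1) :=
    Equiv.tsum_eq e (fun q : (ι × ℕ) × ℕ =>
      Real.exp (-(((q.1.2 : ℝ) + 1) * (a + (q.2 : ℝ)) * ℓ q.1.1)) / ((q.1.2 : ℝ) + 1))
  -- log family
  have hLgsum : ∀ p : ι × ℕ, HasSum
      (fun n : ℕ => Real.exp (-(((n : ℝ) + 1) * (a + (p.2 : ℝ)) * ℓ p.1)) / ((n : ℝ) + 1))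
      (-Real.log (1 - Real.exp (-((a + (p.2 : ℝ)) * ℓ p.1)))) := fun p => h3 p.1 p.2
  have hLg : Summable (fun p : ι × ℕ =>
      Real.log (1 - Real.exp (-((a + (p.2 : ℝ)) * ℓ p.1)))) := by
    have h0 : Summable (fun p : ι × ℕ => ∑' n : ℕ,
        Real.exp (-(((n : ℝ) + 1) * (a + (p.2 : ℝ)) * ℓ p.1)) / ((n : ℝ) + 1)) := hG.prod
    have h' : (fun p : ι × ℕ => ∑' n : ℕ,
        Real.exp (-(((n : ℝ) + 1) * (a + (p.2 : ℝ)) * ℓ p.1)) / ((n : ℝ) + 1)) =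
        fun p => -Real.log (1 - Real.exp (-((a + (p.2 : ℝ)) * ℓ p.1))) := by
      funext p; exact (hLgsum p).tsum_eq
    rw [h'] at h0
    simpa using h0.neg
  have hLgpos : ∀ p : ι × ℕ, 0 < 1 - Real.exp (-((a + (p.2 : ℝ)) * ℓ p.1)) := by
    rintro ⟨i, m⟩
    have hm : (0:ℝ) ≤ (m:ℝ) := Nat.cast_nonneg m
    have := Real.exp_lt_one_iff.2
      (show -((a + (m : ℝ)) * ℓ i) < 0 from neg_lt_zero.2 (mul_pos (by linarith) (hℓpos i)))
    simpa using sub_pos.2 this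
  -- first conjunct
  have hS : Summable (fun p : ι × ℕ =>
      Real.exp (-(((p.2 : ℝ) + 1) * a * ℓ p.1)) /
        (((p.2 : ℝ) + 1) * (1 - Real.exp (-(((p.2 : ℝ) + 1) * ℓ p.1))))) := by
    have h0 : Summable (fun p : ι × ℕ => ∑' m : ℕ,
        Real.exp (-(((p.2 : ℝ) + 1) * (a + (m : ℝ)) * ℓ p.1)) / ((p.2 : ℝ) + 1)) := hF.prod
    have h' : (fun p : ι × ℕ => ∑' m : ℕ,
        Real.exp (-(((p.2 : ℝ) + 1) * (a + (m : ℝ)) * ℓ p.1)) / ((p.2 : ℝ) + 1)) =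
        fun p : ι × ℕ => Real.exp (-(((p.2 : ℝ) + 1) * a * ℓ p.1)) /
          (((p.2 : ℝ) + 1) * (1 - Real.exp (-(((p.2 : ℝ) + 1) * ℓ p.1)))) := by
      funext p; exact (h2 p.1 p.2).tsum_eq
    rwa [h'] at h0
  have hexpLg : (Real.exp ∘ fun p : ι × ℕ =>
      Real.log (1 - Real.exp (-((a + (p.2 : ℝ)) * ℓ p.1)))) =
      fun p : ι × ℕ => 1 - Real.exp (-((a + (p.2 : ℝ)) * ℓ p.1)) := by
    funext p; exact Real.exp_log (hLgpos p)
  refine ⟨hS, ?_, ?_⟩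
  · -- multipliability
    have hP := hLg.hasSum.rexp
    rw [hexpLg] at hP
    exact hP.multipliable
  · -- the identity
    have hsum_eq : (∑' i, ∑' n : ℕ,
        Real.exp (-(((n : ℝ) + 1) * a * ℓ i)) /
          (((n : ℝ) + 1) * (1 - Real.exp (-(((n : ℝ) + 1) * ℓ i))))) =
        ∑' q : (ι × ℕ) × ℕ,
          Real.exp (-(((q.1.2 : ℝ) + 1) * (a + (q.2 : ℝ)) * ℓ q.1.1)) / ((q.1.2 : ℝ) + 1) := by
      calc (∑' i, ∑' n : ℕ, Real.exp (-(((n : ℝ) + 1) * a * ℓ i)) /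
              (((n : ℝ) + 1) * (1 - Real.exp (-(((n : ℝ) + 1) * ℓ i)))))
          = ∑' p : ι × ℕ, Real.exp (-(((p.2 : ℝ) + 1) * a * ℓ p.1)) /
              (((p.2 : ℝ) + 1) * (1 - Real.exp (-(((p.2 : ℝ) + 1) * ℓ p.1)))) :=
            (Summable.tsum_prod hS).symm
        _ = ∑' p : ι × ℕ, ∑' m : ℕ,
              Real.exp (-(((p.2 : ℝ) + 1) * (a + (m : ℝ)) * ℓ p.1)) / ((p.2 : ℝ) + 1) :=
            tsum_congr fun p => ((h2 p.1 p.2).tsum_eq).symm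
        _ = ∑' q : (ι × ℕ) × ℕ,
              Real.exp (-(((q.1.2 : ℝ) + 1) * (a + (q.2 : ℝ)) * ℓ q.1.1)) / ((q.1.2 : ℝ) + 1) :=
            (Summable.tsum_prod hF).symm
    have hlog_eq : (∑' p : ι × ℕ, Real.log (1 - Real.exp (-((a + (p.2 : ℝ)) * ℓ p.1)))) =
        -∑' q : (ι × ℕ) × ℕ,
          Real.exp (-(((q.1.2 : ℝ) + 1) * (a + (q.2 : ℝ)) * ℓ q.1.1)) / ((q.1.2 : ℝ) + 1) := by
      calc (∑' p : ι × ℕ, Real.log (1 - Real.exp (-((a + (p.2 : ℝ)) * ℓ p.1))))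
          = ∑' p : ι × ℕ, -(∑' n : ℕ,
              Real.exp (-(((n : ℝ) + 1) * (a + (p.2 : ℝ)) * ℓ p.1)) / ((n : ℝ) + 1)) :=
            tsum_congr fun p => by rw [(hLgsum p).tsum_eq, neg_neg]
        _ = -∑' p : ι × ℕ, ∑' n : ℕ,
              Real.exp (-(((n : ℝ) + 1) * (a + (p.2 : ℝ)) * ℓ p.1)) / ((n : ℝ) + 1) := tsum_neg
        _ = -∑' q : (ι × ℕ) × ℕ,
              Real.exp (-(((q.2 : ℝ) + 1) * (a + (q.1.2 : ℝ)) * ℓ q.1.1)) / ((q.2 : ℝ) + 1) :=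
            congrArg Neg.neg (Summable.tsum_prod hG).symm
        _ = -∑' q : (ι × ℕ) × ℕ,
              Real.exp (-(((q.1.2 : ℝ) + 1) * (a + (q.2 : ℝ)) * ℓ q.1.1)) / ((q.1.2 : ℝ) + 1) :=
            congrArg Neg.neg hGF
    -- inner products
    have hinner : ∀ i : ι, (∏' m : ℕ, (1 - Real.exp (-((a + (m : ℝ)) * ℓ i)))) =
        Real.exp (∑' m : ℕ, Real.log (1 - Real.exp (-((a + (m : ℝ)) * ℓ i)))) := by
      intro i
      have hs := (hLg.prod_factor i).hasSum
      have hP := hs.rexp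
      have h' : (Real.exp ∘ fun m : ℕ =>
          Real.log (1 - Real.exp (-((a + (m : ℝ)) * ℓ i)))) =
          fun m : ℕ => 1 - Real.exp (-((a + (m : ℝ)) * ℓ i)) := by
        funext m; exact Real.exp_log (hLgpos (i, m))
      rw [h'] at hP
      exact hP.tprod_eq
    have houter : HasSum
        (fun i : ι => ∑' m : ℕ, Real.log (1 - Real.exp (-((a + (m : ℝ)) * ℓ i))))
        (∑' p : ι × ℕ, Real.log (1 - Real.exp (-((a + (p.2 : ℝ)) * ℓ p.1)))) := by
      have h0 := hLg.prod.hasSum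
      have h1 : (∑' i : ι, ∑' m : ℕ, Real.log (1 - Real.exp (-((a + (m : ℝ)) * ℓ i)))) =
          ∑' p : ι × ℕ, Real.log (1 - Real.exp (-((a + (p.2 : ℝ)) * ℓ p.1))) :=
        (Summable.tsum_prod hLg).symm
      rw [h1] at h0
      exact h0
    have hPout := houter.rexp
    have hmain : (∏' i : ι, Real.exp (∑' m : ℕ,
        Real.log (1 - Real.exp (-((a + (m : ℝ)) * ℓ i))))) =
        Real.exp (∑' p : ι × ℕ, Real.log (1 - Real.exp (-((a + (p.2 : ℝ)) * ℓ p.1)))) :=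
      hPout.tprod_eq
    calc Real.exp (-(∑' i, ∑' n : ℕ,
        Real.exp (-(((n : ℝ) + 1) * a * ℓ i)) /
          (((n : ℝ) + 1) * (1 - Real.exp (-(((n : ℝ) + 1) * ℓ i))))))
        = Real.exp (∑' p : ι × ℕ, Real.log (1 - Real.exp (-((a + (p.2 : ℝ)) * ℓ p.1)))) := by
          rw [hsum_eq, hlog_eq]
      _ = ∏' i : ι, Real.exp (∑' m : ℕ,
            Real.log (1 - Real.exp (-((a + (m : ℝ)) * ℓ i)))) := hmain.symm
      _ = ∏' i, ∏' m : ℕ, (1 - Real.exp (-((a + (m : ℝ)) * ℓ i))) := by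
          congr 1; funext i; exact (hinner i).symm
end
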